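/- Let P be a finite set of at least 3 points in the plane in general position. Then every triangulation T of P is 2-connected (as an abstract graph). -/

import Mathlib

open scoped Classical

noncomputable section

/-- Points of the plane. -/
abbrev Pt : Type := ℝ × ℝ

/-- Orientation determinant of two plane vectors. -/
def det2 (u v : Pt) : ℝ := u.1 * v.2 - u.2 * v.1

/-- `P` is in general position: no three distinct points of `P` are collinear. -/
def GenPos (P : Finset Pt) : Prop :=
  ∀ p ∈ P, ∀ q ∈ P, ∀ r ∈ P, p ≠ q → p ≠ r → q ≠ r → ¬Collinear ℝ ({p, q, r} : Set Pt)

/-- The vertices of the convex hull of `P` (the extreme points of `P`). -/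
def hullVx (P : Finset Pt) : Finset Pt :=
  P.filter fun p => p ∉ convexHull ℝ ((P.erase p : Finset Pt) : Set Pt)

/-- The points of `P` lying in the interior of the convex hull of `P`. -/
def intPts (P : Finset Pt) : Finset Pt :=
  P.filter fun p => p ∈ interior (convexHull ℝ (P : Set Pt))

/-- `p` and `q` are consecutive vertices of the convex hull of `P`
(the segment joining them is an edge of the hull boundary). -/
def HullEdge (P : Finset Pt) (p q : Pt) : Prop :=
  p ∈ hullVx P ∧ q ∈ hullVx P ∧ p ≠ q ∧
    segment ℝ p q ⊆ frontier (convexHull ℝ (P : Set Pt))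

/-- A plane graph with vertex set `P`, all of whose edges are straight line
segments: edges may only meet at common endpoints. -/
structure PlaneGraph (P : Finset Pt) where
  Adj : Pt → Pt → Prop
  symm : ∀ {p q}, Adj p q → Adj q p
  mem_left : ∀ {p q}, Adj p q → p ∈ P
  ne : ∀ {p q}, Adj p q → p ≠ q
  noncross : ∀ {p q r s}, Adj p q → Adj r s →
    (openSegment ℝ p q ∩ openSegment ℝ r s).Nonempty → ({p, q} : Set Pt) = {r, s}

/-- A triangulation of `P`: a plane straight-line graph on `P` that is maximal,
i.e. no further segment between points of `P` can be added without crossing an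
existing edge.  (For a finite point set in general position this is equivalent
to: the outer face is the complement of the convex hull and every bounded face
is a triangle.) -/
structure Triangulation (P : Finset Pt) extends PlaneGraph P where
  maximal : ∀ p ∈ P, ∀ q ∈ P, p ≠ q → ¬Adj p q →
    ∃ r s, Adj r s ∧ ({p, q} : Set Pt) ≠ {r, s} ∧
      (openSegment ℝ p q ∩ openSegment ℝ r s).Nonempty

/-- The abstract graph underlying a plane graph. -/
def PlaneGraph.graph {P : Finset Pt} (G : PlaneGraph P) : SimpleGraph {x // x ∈ P} where
  Adj p q := G.Adj p q
  symm := ⟨fun _ _ h => G.symm h⟩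
  loopless := ⟨fun _ h => G.ne h rfl⟩

/-- A graph is `k`-connected if it has at least `k+1` vertices and no set of at
most `k-1` vertices disconnects it (removing fewer than `k` vertices leaves a
connected graph). -/
def KConnected {V : Type*} [Fintype V] (G : SimpleGraph V) (k : ℕ) : Prop :=
  k + 1 ≤ Fintype.card V ∧
    ∀ S : Finset V, S.card < k → (G.induce ((↑S : Set V)ᶜ)).Connected

/-- A chord of a plane graph on `P`: an edge joining two nonconsecutive
vertices of the convex hull of `P`. -/
def IsChord {P : Finset Pt} (G : PlaneGraph P) (p q : Pt) : Prop :=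
  G.Adj p q ∧ p ∈ hullVx P ∧ q ∈ hullVx P ∧ ¬HullEdge P p q

/-- Three points forming a triangle of the graph `G` (pairwise adjacent). -/
def IsTriangleOf {P : Finset Pt} (G : PlaneGraph P) (p q r : Pt) : Prop :=
  G.Adj p q ∧ G.Adj q r ∧ G.Adj p r

/-- A complex triangle of `G`: a triangle formed by three edges of `G` that
contains a point of `P` in its interior and another point of `P` in its
exterior. -/
def IsComplexTri {P : Finset Pt} (G : PlaneGraph P) (p q r : Pt) : Prop :=
  IsTriangleOf G p q r ∧
    (∃ x ∈ P, x ∈ interior (convexHull ℝ ({p, q, r} : Set Pt))) ∧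
    (∃ y ∈ P, y ∉ convexHull ℝ ({p, q, r} : Set Pt))

/-- A triangulation is noncomplex if it has neither chords nor complex
triangles. -/
def Noncomplex {P : Finset Pt} (T : Triangulation P) : Prop :=
  (∀ p q, ¬IsChord T.toPlaneGraph p q) ∧ ∀ p q r, ¬IsComplexTri T.toPlaneGraph p q r

/-- `Q` is anomalous: its convex hull is a triangle and there is a hull vertex
`p` such that every point of `Q \ {p}` lies on the boundary of the convex hull
of `Q \ {p}`. -/
def Anomalous (Q : Finset Pt) : Prop :=
  (hullVx Q).card = 3 ∧
    ∃ p ∈ hullVx Q, ∀ q ∈ Q.erase p,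
      q ∉ interior (convexHull ℝ ((Q.erase p : Finset Pt) : Set Pt))

/-- `s` is a vertex of the convex hull of `P` lying strictly between `pr` and
`pt` in counterclockwise order (i.e. on the open counterclockwise hull arc
from `pr` to `pt`; for a hull traversed counterclockwise these are exactly the
hull vertices strictly on the right of the directed chord `pr → pt`). -/
def CCWBetween (P : Finset Pt) (pr pt s : Pt) : Prop :=
  s ∈ hullVx P ∧ det2 (pt - pr) (s - pr) < 0

/-- The set `S` of hull vertices strictly between `pr` and `pt`
counterclockwise. -/
def cutSet (P : Finset Pt) (pr pt : Pt) : Finset Pt :=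
  P.filter fun s => CCWBetween P pr pt s

/-- An inward triangle of a plane graph `G` on `P`: a triangle of `G` two of
whose vertices `b`, `c` are consecutive hull vertices and whose third vertex
`a` (its inward vertex) is an interior point of the hull. -/
def InwardTri {P : Finset Pt} (G : PlaneGraph P) (b c a : Pt) : Prop :=
  IsTriangleOf G b c a ∧ HullEdge P b c ∧ a ∈ intPts P

/-- A (geometric) inward triangle of the point set `P`: its base `b c` is an
edge of the hull and its inward vertex `a` is an interior point. -/
def GInwardTri (P : Finset Pt) (b c a : Pt) : Prop :=
  HullEdge P b c ∧ a ∈ intPts P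

/-- The triangle `b c a` contains no point of `P` in its interior. -/
def EmptyTri (P : Finset Pt) (b c a : Pt) : Prop :=
  ∀ x ∈ P, x ∉ interior (convexHull ℝ ({b, c, a} : Set Pt))

/-- The inward triangle `b c a` is forbidden: for some hull vertices `pr ≠ pt`,
its base edge lies on the clockwise hull chain from `pr` to `pt` (i.e. `b`, `c`
are not strictly counterclockwise between `pr` and `pt`) while its inward
vertex lies on the boundary of the convex hull of `Q = P \ S`. -/
def ForbiddenTri (P : Finset Pt) (b c a : Pt) : Prop :=
  ∃ pr ∈ hullVx P, ∃ pt ∈ hullVx P, pr ≠ pt ∧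
    b ∉ cutSet P pr pt ∧ c ∉ cutSet P pr pt ∧
    a ∉ interior (convexHull ℝ ((P \ cutSet P pr pt : Finset Pt) : Set Pt))

/-- A triangle, recorded as `(b, c, a)` with base `b c` and inward vertex `a`. -/
abbrev Tri : Type := Pt × Pt × Pt

def triVerts (t : Tri) : Set Pt := {t.1, t.2.1, t.2.2}

def triInterior (t : Tri) : Set Pt := interior (convexHull ℝ (triVerts t))

/-- A non-forbidden empty inward triangle of `P`. -/
def GoodTri (P : Finset Pt) (t : Tri) : Prop :=
  GInwardTri P t.1 t.2.1 t.2.2 ∧ EmptyTri P t.1 t.2.1 t.2.2 ∧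
    ¬ForbiddenTri P t.1 t.2.1 t.2.2

/-- Two triangles share an edge (i.e. share two distinct vertices). -/
def ShareEdge (t₁ t₂ : Tri) : Prop :=
  ∃ u v : Pt, u ≠ v ∧ u ∈ triVerts t₁ ∧ v ∈ triVerts t₁ ∧
    u ∈ triVerts t₂ ∧ v ∈ triVerts t₂

/-- A compatible set of triangles: all its members are non-forbidden empty
inward triangles, and no two (distinct) members share an edge, an inward
vertex, or an interior point. -/
def Compatible (P : Finset Pt) (Tc : Finset Tri) : Prop :=
  (∀ t ∈ Tc, GoodTri P t) ∧
    ∀ t₁ ∈ Tc, ∀ t₂ ∈ Tc, triVerts t₁ ≠ triVerts t₂ →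
      ¬ShareEdge t₁ t₂ ∧ t₁.2.2 ≠ t₂.2.2 ∧ triInterior t₁ ∩ triInterior t₂ = ∅

/-- A maximal compatible set: no inward triangle can be added while keeping it
compatible. -/
def MaxCompatible (P : Finset Pt) (Tc : Finset Tri) : Prop :=
  Compatible P Tc ∧
    ∀ t : Tri, Compatible P (insert t Tc) → ∃ t' ∈ Tc, triVerts t' = triVerts t

/-- The number of triangles of `Tc` whose inward vertex is a vertex of the
convex hull of `P'` (counted up to the underlying vertex set). -/
def tcPrimeCard (P : Finset Pt) (Tc : Finset Tri) : ℕ :=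
  ((Tc.filter fun t => t.2.2 ∈ hullVx (intPts P)).image triVerts).card

/-- `max|T_c'|`: the maximum, over all maximal compatible sets `T_c`, of the
number of triangles of `T_c` whose inward vertex is a hull vertex of `P'`. -/
noncomputable def maxTcPrime (P : Finset Pt) : ℕ :=
  sSup {m | ∃ Tc : Finset Tri, MaxCompatible P Tc ∧ m = tcPrimeCard P Tc}

/-!
Fix a linear functional `φ` that is injective on `P`. In a triangulation every point `a ∈ P`
that does not maximise `φ` has a neighbour `b` with `φ a < φ b`. Indeed, head from `a` towards a
higher point; if that segment is not an edge, let `x` be its first crossing with an edge `r s`,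
where `r` is higher than `a`. The triangle `a x r` then has an empty side `a x` and its side
`x r` on an edge, so any edge crossing into it from `a r` has an endpoint inside it. Thus either
`a r` is an edge, or some `w ∈ P` inside the triangle (hence higher than `a`) is a neighbour, or
the first edge crossing `a w` yields a triangle of the same kind with fewer points of `P` inside.

So every vertex is joined to the top vertex by a `φ`-increasing path. To see that removing a
vertex `w` leaves two vertices `u`, `v` connected, use general position to choose `φ` with
`φ w < φ u` and `φ w < φ v`: the increasing paths from `u` and `v` avoid `w`.
-/

section Segment

variable {E : Type*} [AddCommGroup E] [Module ℝ E]

theorem mem_openSegment_iff_exists_add_smul {p q z : E} :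
    z ∈ openSegment ℝ p q ↔ ∃ t : ℝ, 0 < t ∧ t < 1 ∧ z = p + t • (q - p) := by
  rw [openSegment_eq_image']
  constructor
  · rintro ⟨t, ht, rfl⟩
    exact ⟨t, ht.1, ht.2, rfl⟩
  · rintro ⟨t, h0, h1, rfl⟩
    exact ⟨t, ⟨h0, h1⟩, rfl⟩

theorem openSegment_subset_openSegment_of_mem_left {a x w : E} (hx : x ∈ openSegment ℝ a w) :
    openSegment ℝ a x ⊆ openSegment ℝ a w := by
  intro z hz
  obtain ⟨t, ht0, ht1, rfl⟩ := mem_openSegment_iff_exists_add_smul.mp hx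
  obtain ⟨s, hs0, hs1, rfl⟩ := mem_openSegment_iff_exists_add_smul.mp hz
  refine mem_openSegment_iff_exists_add_smul.mpr ⟨s * t, by positivity, by nlinarith, ?_⟩
  module

theorem openSegment_subset_openSegment_of_mem_right {a x w : E} (hx : x ∈ openSegment ℝ a w) :
    openSegment ℝ x w ⊆ openSegment ℝ a w := by
  rw [openSegment_symm ℝ x, openSegment_symm ℝ a]
  exact openSegment_subset_openSegment_of_mem_left (openSegment_symm ℝ a w ▸ hx)

end Segment

section Orientation

def orient (a b c : Pt) : ℝ := det2 (b - a) (c - a)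

def SameSide (a b y z : Pt) : Prop := 0 < orient a b y * orient a b z

@[simp] theorem orient_eq_zero_left (a b : Pt) : orient a b a = 0 := by
  simp [orient, det2]

@[simp] theorem orient_eq_zero_right (a b : Pt) : orient a b b = 0 := by
  simp [orient, det2]; ring

theorem orient_rotate (a b c : Pt) : orient b c a = orient a b c := by
  simp [orient, det2]; ring

theorem orient_swap (a b c : Pt) : orient a c b = -orient a b c := by
  simp [orient, det2]; ring

theorem orient_add_smul_sub (a b p q : Pt) (t : ℝ) :
    orient a b (p + t • (q - p)) = (1 - t) * orient a b p + t * orient a b q := by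
  simp [orient, det2]; ring

theorem orient_add_orient_add_orient (a b c y : Pt) :
    orient b c y + orient c a y + orient a b y = orient a b c := by
  simp [orient, det2]; ring

theorem orient_smul_eq (a b c y : Pt) :
    orient a b c • y = orient b c y • a + orient c a y • b + orient a b y • c := by
  ext <;> simp [orient, det2] <;> ring

theorem det2_smul_eq (u v w : Pt) : det2 u v • w = det2 w v • u + det2 u w • v := by
  ext <;> simp [det2] <;> ring

theorem ne_of_orient_ne_zero {a b c : Pt} (h : orient a b c ≠ 0) : a ≠ b ∧ b ≠ c ∧ c ≠ a := by
  refine ⟨?_, ?_, ?_⟩ <;> rintro rfl <;> [simp [orient, det2] at h; simp at h; simp at h]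

theorem exists_eq_smul_of_det2_eq_zero {u v : Pt} (hu : u ≠ 0) (h : det2 u v = 0) :
    ∃ t : ℝ, v = t • u := by
  by_cases h1 : u.1 = 0
  · have h2 : u.2 ≠ 0 := fun h2 => hu (Prod.ext h1 h2)
    refine ⟨v.2 / u.2, Prod.ext ?_ (by simp [h2])⟩
    simp only [det2, h1, zero_mul, zero_sub, neg_eq_zero, mul_eq_zero, h2, false_or] at h
    simp [h, h1]
  · refine ⟨v.1 / u.1, Prod.ext (by simp [h1]) ?_⟩
    simp only [det2] at h
    simp only [Prod.smul_snd, smul_eq_mul]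
    field_simp
    linarith

theorem exists_eq_add_smul_of_orient_eq_zero {a b y : Pt} (hab : a ≠ b)
    (h : orient a b y = 0) : ∃ e : ℝ, y = a + e • (b - a) := by
  obtain ⟨e, he⟩ := exists_eq_smul_of_det2_eq_zero (sub_ne_zero.mpr hab.symm) h
  exact ⟨e, by rw [← he]; abel⟩

theorem collinear_of_orient_eq_zero {a b c : Pt} (hab : a ≠ b) (h : orient a b c = 0) :
    Collinear ℝ ({a, b, c} : Set Pt) := by
  obtain ⟨t, ht⟩ := exists_eq_add_smul_of_orient_eq_zero hab h
  rw [collinear_iff_of_mem (Set.mem_insert a {b, c})]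
  refine ⟨b - a, ?_⟩
  rintro p (rfl | rfl | rfl)
  · exact ⟨0, by simp⟩
  · exact ⟨1, by simp⟩
  · exact ⟨t, by rw [ht, vadd_eq_add, add_comm]⟩

theorem orient_eq_zero_of_mem_openSegment {a b z : Pt} (hz : z ∈ openSegment ℝ a b) :
    orient a b z = 0 := by
  obtain ⟨t, -, -, rfl⟩ := mem_openSegment_iff_exists_add_smul.mp hz
  simp [orient_add_smul_sub]

theorem orient_eq_zero_of_mem_openSegment_of_mem_openSegment {a b c z : Pt}
    (hb : z ∈ openSegment ℝ a b) (hc : z ∈ openSegment ℝ a c) : orient a b c = 0 := by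
  obtain ⟨t, ht0, -, rfl⟩ := mem_openSegment_iff_exists_add_smul.mp hc
  have h := orient_eq_zero_of_mem_openSegment hb
  rw [orient_add_smul_sub, orient_eq_zero_left, mul_zero, zero_add] at h
  exact (mul_eq_zero.mp h).resolve_left ht0.ne'

theorem orient_eq_zero_of_both_mem_openSegment {r s x z : Pt}
    (hx : x ∈ openSegment ℝ r s) (hz : z ∈ openSegment ℝ r s) : orient x r z = 0 := by
  obtain ⟨ν, -, -, rfl⟩ := mem_openSegment_iff_exists_add_smul.mp hx
  obtain ⟨μ, -, -, rfl⟩ := mem_openSegment_iff_exists_add_smul.mp hz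
  simp [orient, det2]; ring

theorem orient_ne_zero_of_mem_openSegment {a r s x : Pt} (h : orient r s a ≠ 0)
    (hx : x ∈ openSegment ℝ r s) : orient a x r ≠ 0 := by
  obtain ⟨ν, hν, -, rfl⟩ := mem_openSegment_iff_exists_add_smul.mp hx
  rw [orient_rotate, orient_add_smul_sub, orient_eq_zero_left, orient_swap]
  simpa [hν.ne'] using h

theorem eq_of_mem_openSegment_of_orient_eq_zero {a b r s z₁ z₂ : Pt} (hr : orient a b r ≠ 0)
    (h₁ : z₁ ∈ openSegment ℝ r s) (h₂ : z₂ ∈ openSegment ℝ r s)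
    (hz₁ : orient a b z₁ = 0) (hz₂ : orient a b z₂ = 0) : z₁ = z₂ := by
  obtain ⟨u₁, -, -, rfl⟩ := mem_openSegment_iff_exists_add_smul.mp h₁
  obtain ⟨u₂, -, -, rfl⟩ := mem_openSegment_iff_exists_add_smul.mp h₂
  rw [orient_add_smul_sub] at hz₁ hz₂
  obtain rfl : u₁ = u₂ := by
    by_contra hne
    have : orient a b s = orient a b r :=
      mul_left_cancel₀ (sub_ne_zero.mpr hne) (by linear_combination hz₁ - hz₂)
    exact hr (by linear_combination hz₁ - u₁ * this)
  rfl

theorem mem_openSegment_of_orient_eq_zero {a b c y : Pt} (h : orient a b c ≠ 0)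
    (hy : orient a b y = 0) (hbc : SameSide b c y a) (hca : SameSide c a y b) :
    y ∈ openSegment ℝ a b := by
  obtain ⟨e, rfl⟩ := exists_eq_add_smul_of_orient_eq_zero (ne_of_orient_ne_zero h).1 hy
  rw [SameSide, orient_add_smul_sub, orient_eq_zero_left, orient_rotate] at hbc
  rw [SameSide, orient_add_smul_sub, orient_eq_zero_right, orient_rotate b c a,
    orient_rotate] at hca
  have hK := mul_self_pos.mpr h
  refine mem_openSegment_iff_exists_add_smul.mpr ⟨e, ?_, ?_, rfl⟩ <;> nlinarith

theorem eq_of_orient_eq_zero {a b c y : Pt} (h : orient a b c ≠ 0) (h₁ : orient a b y = 0)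
    (h₂ : orient b c y = 0) : y = b := by
  obtain ⟨e, rfl⟩ := exists_eq_add_smul_of_orient_eq_zero (ne_of_orient_ne_zero h).1 h₁
  rw [orient_add_smul_sub, orient_eq_zero_left, orient_rotate] at h₂
  obtain rfl : e = 1 := by
    have : (1 - e) * orient a b c = 0 := by linarith
    linarith [(mul_eq_zero.mp this).resolve_right h]
  module

end Orientation

namespace GenPos

variable {P : Finset Pt} (hgp : GenPos P) {a b c : Pt}
include hgp

theorem orient_ne_zero (ha : a ∈ P) (hb : b ∈ P) (hc : c ∈ P) (hab : a ≠ b) (hac : a ≠ c)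
    (hbc : b ≠ c) : orient a b c ≠ 0 :=
  fun h => hgp a ha b hb c hc hab hac hbc (collinear_of_orient_eq_zero hab h)

theorem notMem_openSegment (ha : a ∈ P) (hb : b ∈ P) (hc : c ∈ P) (hab : a ≠ b) :
    c ∉ openSegment ℝ a b := by
  intro hmem
  have hca : c ≠ a := by rintro rfl; simp_all
  have hcb : c ≠ b := by rintro rfl; simp_all
  exact hgp.orient_ne_zero ha hb hc hab hca.symm hcb.symm
    (orient_eq_zero_of_mem_openSegment hmem)

end GenPos

section OpenTriangle

def InOpenTri (a b c y : Pt) : Prop :=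
  ∃ α β γ : ℝ, 0 < α ∧ 0 < β ∧ 0 < γ ∧ α + β + γ = 1 ∧ y = α • a + β • b + γ • c

theorem inOpenTri_iff {a b c y : Pt} (h : orient a b c ≠ 0) :
    InOpenTri a b c y ↔ SameSide a b y c ∧ SameSide b c y a ∧ SameSide c a y b := by
  have hbca : orient b c a = orient a b c := orient_rotate a b c
  have hcab : orient c a b = orient a b c := by rw [orient_rotate, orient_rotate]
  have hK : 0 < orient a b c * orient a b c := mul_self_pos.mpr h
  constructor
  · rintro ⟨α, β, γ, hα, hβ, hγ, hsum, rfl⟩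
    obtain rfl : α = 1 - β - γ := by linarith
    have e₁ : orient a b ((1 - β - γ) • a + β • b + γ • c) = γ * orient a b c := by
      simp [orient, det2]; ring
    have e₂ : orient b c ((1 - β - γ) • a + β • b + γ • c) = (1 - β - γ) * orient a b c := by
      simp [orient, det2]; ring
    have e₃ : orient c a ((1 - β - γ) • a + β • b + γ • c) = β * orient a b c := by
      simp [orient, det2]; ring
    simp only [SameSide, e₁, e₂, e₃, hbca, hcab, mul_assoc]
    exact ⟨mul_pos hγ hK, mul_pos hα hK, mul_pos hβ hK⟩
  · rintro ⟨h₁, h₂, h₃⟩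
    rw [SameSide, hbca] at h₂
    rw [SameSide, hcab] at h₃
    have hpos : ∀ {u : ℝ}, 0 < u * orient a b c → 0 < u / orient a b c := fun hu =>
      div_pos_iff.mpr (pos_and_pos_or_neg_and_neg_of_mul_pos hu)
    refine ⟨orient b c y / orient a b c, orient c a y / orient a b c,
      orient a b y / orient a b c, hpos h₂, hpos h₃, hpos h₁, ?_, ?_⟩
    · rw [← add_div, ← add_div, orient_add_orient_add_orient, div_self h]
    · apply smul_right_injective Pt h
      simp only [smul_add, smul_smul, mul_div_cancel₀ _ h]
      exact orient_smul_eq a b c y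

namespace InOpenTri

variable {a b c y : Pt}

theorem of_mem_openSegment (hy : InOpenTri a b c y) {z : Pt} (hz : z ∈ openSegment ℝ a y) :
    InOpenTri a b c z := by
  obtain ⟨α, β, γ, hα, hβ, hγ, hsum, rfl⟩ := hy
  obtain ⟨l, hl0, hl1, rfl⟩ := mem_openSegment_iff_exists_add_smul.mp hz
  refine ⟨1 - l + l * α, l * β, l * γ, by nlinarith, by positivity, by positivity,
    by linear_combination l * hsum, ?_⟩
  module

theorem of_inOpenTri {b' c' : Pt} (hb' : InOpenTri a b c b') (hc' : InOpenTri a b c c')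
    (hy : InOpenTri a b' c' y) : InOpenTri a b c y := by
  obtain ⟨α₁, β₁, γ₁, hα₁, hβ₁, hγ₁, hsum₁, rfl⟩ := hb'
  obtain ⟨α₂, β₂, γ₂, hα₂, hβ₂, hγ₂, hsum₂, rfl⟩ := hc'
  obtain ⟨α, β, γ, hα, hβ, hγ, hsum, rfl⟩ := hy
  refine ⟨α + β * α₁ + γ * α₂, β * β₁ + γ * β₂, β * γ₁ + γ * γ₂, by positivity,
    by positivity, by positivity, by linear_combination hsum + β * hsum₁ + γ * hsum₂, ?_⟩
  module

theorem lt_apply (φ : Pt →ₗ[ℝ] ℝ) (hy : InOpenTri a b c y) (hb : φ a < φ b) (hc : φ a < φ c) :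
    φ a < φ y := by
  obtain ⟨α, β, γ, hα, hβ, hγ, hsum, rfl⟩ := hy
  simp only [map_add, map_smul, smul_eq_mul]
  have e : φ a = (α + β + γ) * φ a := by rw [hsum, one_mul]
  nlinarith [mul_lt_mul_of_pos_left hb hβ, mul_lt_mul_of_pos_left hc hγ]

theorem orient_ne_zero (hy : InOpenTri a b c y) (h : orient a b c ≠ 0) : orient a b y ≠ 0 :=
  left_ne_zero_of_mul ((inOpenTri_iff h).mp hy).1.ne'

end InOpenTri

end OpenTriangle

theorem exists_first_root {Z₁ Z₂ Q₁ Q₂ : ℝ} (hZ₁ : 0 < Z₁) (hZ₂ : 0 < Z₂)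
    (hQ : Q₁ ≤ 0 ∨ Q₂ ≤ 0) :
    ∃ c : ℝ, 0 < c ∧ c ≤ 1 ∧ 0 ≤ (1 - c) * Z₁ + c * Q₁ ∧ 0 ≤ (1 - c) * Z₂ + c * Q₂ ∧
      ((1 - c) * Z₁ + c * Q₁ = 0 ∨ (1 - c) * Z₂ + c * Q₂ = 0) := by
  wlog h : Q₁ ≤ 0 ∧ (0 < Q₂ ∨ Z₁ / (Z₁ - Q₁) ≤ Z₂ / (Z₂ - Q₂)) generalizing Z₁ Z₂ Q₁ Q₂
  · have h' : Q₂ ≤ 0 ∧ (0 < Q₁ ∨ Z₂ / (Z₂ - Q₂) ≤ Z₁ / (Z₁ - Q₁)) := by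
      by_cases hQ₁ : Q₁ ≤ 0
      · push Not at h
        obtain ⟨hQ₂, hlt⟩ := h hQ₁
        exact ⟨hQ₂, Or.inr hlt.le⟩
      · exact ⟨hQ.resolve_left hQ₁, Or.inl (not_le.mp hQ₁)⟩
    obtain ⟨c, hc0, hc1, h₁, h₂, h₀⟩ := this hZ₂ hZ₁ hQ.symm h'
    exact ⟨c, hc0, hc1, h₂, h₁, h₀.symm⟩
  obtain ⟨hQ₁, hroot⟩ := h
  have hden : 0 < Z₁ - Q₁ := by linarith
  have hc1 : Z₁ / (Z₁ - Q₁) ≤ 1 := (div_le_one hden).mpr (by linarith)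
  have hroot₁ : (1 - Z₁ / (Z₁ - Q₁)) * Z₁ + Z₁ / (Z₁ - Q₁) * Q₁ = 0 := by
    field_simp; ring
  refine ⟨Z₁ / (Z₁ - Q₁), by positivity, hc1, hroot₁.ge, ?_, Or.inl hroot₁⟩
  rcases hroot with hQ₂ | hle
  · nlinarith
  · by_cases hQ₂ : 0 < Q₂
    · nlinarith
    · rw [le_div_iff₀ (by linarith)] at hle
      nlinarith

theorem LinearMap.lt_apply_of_mem_openSegment (φ : Pt →ₗ[ℝ] ℝ) {a c x : Pt}
    (hx : x ∈ openSegment ℝ a c) (hac : φ a < φ c) : φ a < φ x := by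
  obtain ⟨t, ht0, -, rfl⟩ := mem_openSegment_iff_exists_add_smul.mp hx
  simp only [map_add, map_smul, map_sub, smul_eq_mul]
  nlinarith

theorem LinearMap.lt_apply_left_or_right (φ : Pt →ₗ[ℝ] ℝ) {a r s x : Pt}
    (hx : x ∈ openSegment ℝ r s) (hax : φ a < φ x) : φ a < φ r ∨ φ a < φ s := by
  obtain ⟨t, ht0, ht1, rfl⟩ := mem_openSegment_iff_exists_add_smul.mp hx
  simp only [map_add, map_smul, map_sub, smul_eq_mul] at hax
  by_contra! h
  nlinarith

theorem sameSide_of_mem_openSegment {a x r t z : Pt} (hK : orient a x r ≠ 0)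
    (ht : InOpenTri a x r t ∨ t = r) (hz : z ∈ openSegment ℝ a t) :
    SameSide a x z r ∧ SameSide x r z a ∧ 0 ≤ orient r a z * orient r a x ∧
      (orient r a z = 0 → t = r) := by
  rcases ht with ht | rfl
  · obtain ⟨h₁, h₂, h₃⟩ := (inOpenTri_iff hK).mp (ht.of_mem_openSegment hz)
    exact ⟨h₁, h₂, h₃.le, fun h => absurd h (left_ne_zero_of_mul h₃.ne')⟩
  · have hK₂ : orient x t a ≠ 0 := by rwa [orient_rotate]
    obtain ⟨l, hl0, hl1, rfl⟩ := mem_openSegment_iff_exists_add_smul.mp hz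
    refine ⟨?_, ?_, ?_, fun _ => rfl⟩ <;>
      simp only [SameSide, orient_add_smul_sub, orient_eq_zero_left, orient_eq_zero_right]
    · nlinarith [mul_self_pos.mpr hK]
    · nlinarith [mul_self_pos.mpr hK₂]
    · simp

theorem exists_add_smul_mem_sides {a x r z q : Pt} (hK : orient a x r ≠ 0)
    (hz₁ : SameSide a x z r) (hz₂ : SameSide x r z a) (hz₃ : 0 ≤ orient r a z * orient r a x)
    (hq : SameSide r a q x) (hout : ¬InOpenTri a x r q) :
    ∃ c : ℝ, 0 < c ∧ c ≤ 1 ∧ (z + c • (q - z) ∈ openSegment ℝ a x ∨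
      z + c • (q - z) ∈ openSegment ℝ x r ∨ z + c • (q - z) = x) := by
  have hK' : orient x r a ≠ 0 := by rwa [orient_rotate]
  rw [inOpenTri_iff hK, SameSide, SameSide] at hout
  replace hout : orient a x q * orient a x r ≤ 0 ∨ orient x r q * orient x r a ≤ 0 := by
    by_contra! h
    exact hout ⟨h.1, h.2, hq⟩
  -- the segment from `z` to `q` first leaves the triangle at `z + c • (q - z)`
  obtain ⟨c, hc0, hc1, h₁, h₂, h₀⟩ := exists_first_root hz₁ hz₂ hout
  refine ⟨c, hc0, hc1, ?_⟩
  set y := z + c • (q - z) with hy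
  have e₁ : orient a x y * orient a x r = (1 - c) * (orient a x z * orient a x r) +
      c * (orient a x q * orient a x r) := by rw [hy, orient_add_smul_sub]; ring
  have e₂ : orient x r y * orient x r a = (1 - c) * (orient x r z * orient x r a) +
      c * (orient x r q * orient x r a) := by rw [hy, orient_add_smul_sub]; ring
  have hy₃ : SameSide r a y x := by
    rw [SameSide, hy, orient_add_smul_sub]
    rw [SameSide] at hq
    nlinarith
  by_cases hy₁ : orient a x y = 0
  · by_cases hy₂ : orient x r y = 0
    · exact .inr (.inr (eq_of_orient_eq_zero hK hy₁ hy₂))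
    · have hy₂' : SameSide x r y a := lt_of_le_of_ne (e₂ ▸ h₂) (mul_ne_zero hy₂ hK').symm
      exact .inl (mem_openSegment_of_orient_eq_zero hK hy₁ hy₂' hy₃)
  · have hy₂ : orient x r y = 0 := by
      rcases h₀ with h | h
      · exact absurd (by rw [e₁, h]) (mul_ne_zero hy₁ hK)
      · exact (mul_eq_zero.mp (e₂ ▸ h)).resolve_right hK'
    have hy₁' : SameSide a x y r := lt_of_le_of_ne (e₁ ▸ h₁) (mul_ne_zero hy₁ hK).symm
    exact .inr (.inl (mem_openSegment_of_orient_eq_zero hK' hy₂ hy₃ hy₁'))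

namespace PlaneGraph

variable {P : Finset Pt} {G : PlaneGraph P}

theorem ne_of_crossing (hgp : GenPos P) {a b r s z : Pt} (ha : a ∈ P) (hb : b ∈ P)
    (hnadj : ¬G.Adj a b) (hrs : G.Adj r s) (hzab : z ∈ openSegment ℝ a b)
    (hzrs : z ∈ openSegment ℝ r s) : r ≠ a := by
  rintro rfl
  have hs : s ∈ P := G.mem_left (G.symm hrs)
  have hsb : s ≠ b := by rintro rfl; exact hnadj hrs
  have hrb : r ≠ b := by
    rintro rfl
    rw [openSegment_same, Set.mem_singleton_iff] at hzab
    subst hzab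
    exact G.ne hrs (left_mem_openSegment_iff.mp hzrs)
  exact hgp.orient_ne_zero ha hb hs hrb (G.ne hrs) hsb.symm
    (orient_eq_zero_of_mem_openSegment_of_mem_openSegment hzab hzrs)

variable (G) in
/-- The point `x` of the edge `r s` is visible from `a`. -/
structure Sees (a r s x : Pt) : Prop where
  adj : G.Adj r s
  mem_openSegment : x ∈ openSegment ℝ r s
  orient_ne_zero : orient a x r ≠ 0
  disjoint : ∀ p q, G.Adj p q → Disjoint (openSegment ℝ a x) (openSegment ℝ p q)
  notMem : ∀ w ∈ P, w ∉ openSegment ℝ a x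

/- An edge `p q` entering the triangle `a x r` cannot leave it: the side `a x` is free, and the
side `x r` lies on the edge `r s`. -/
theorem Sees.inOpenTri_of_sameSide (hgp : GenPos P) {a r s x p q z : Pt} (hS : G.Sees a r s x)
    (hpq : G.Adj p q) (hz : z ∈ openSegment ℝ p q) (hz₁ : SameSide a x z r)
    (hz₂ : SameSide x r z a) (hz₃ : 0 ≤ orient r a z * orient r a x) (hq : SameSide r a q x) :
    InOpenTri a x r q := by
  by_contra hout
  obtain ⟨c, hc0, hc1, hy⟩ := exists_add_smul_mem_sides hS.orient_ne_zero hz₁ hz₂ hz₃ hq hout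
  set y := z + c • (q - z) with hy_def
  have hy_sides : y ∈ openSegment ℝ a x ∨ y ∈ openSegment ℝ r s := by
    rcases hy with hy | hy | hy
    · exact .inl hy
    · exact .inr (openSegment_subset_openSegment_of_mem_left hS.mem_openSegment
        (openSegment_symm ℝ x r ▸ hy))
    · exact .inr (hy ▸ hS.mem_openSegment)
  have hqP : q ∈ P := G.mem_left (G.symm hpq)
  rcases hc1.lt_or_eq with hc1 | rfl
  · have hy_pq : y ∈ openSegment ℝ p q := openSegment_subset_openSegment_of_mem_right hz
      (mem_openSegment_iff_exists_add_smul.mpr ⟨c, hc0, hc1, rfl⟩)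
    rcases hy_sides with hy_ax | hy_rs
    · exact Set.disjoint_left.mp (hS.disjoint p q hpq) hy_ax hy_pq
    · have hz_rs : z ∈ openSegment ℝ r s := by
        rcases Set.pair_eq_pair_iff.mp (G.noncross hpq hS.adj ⟨y, hy_pq, hy_rs⟩) with
          ⟨rfl, rfl⟩ | ⟨rfl, rfl⟩
        · exact hz
        · rwa [openSegment_symm]
      rw [SameSide, orient_eq_zero_of_both_mem_openSegment hS.mem_openSegment hz_rs,
        zero_mul] at hz₂
      exact lt_irrefl 0 hz₂
  · have hyq : y = q := by rw [hy_def]; module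
    rcases hy_sides with hy_ax | hy_rs
    · exact hS.notMem q hqP (hyq ▸ hy_ax)
    · exact hgp.notMem_openSegment (G.mem_left hS.adj) (G.mem_left (G.symm hS.adj)) hqP
        (G.ne hS.adj) (hyq ▸ hy_rs)

theorem Sees.inOpenTri_of_crossing (hgp : GenPos P) {a r s x t p q z : Pt}
    (hS : G.Sees a r s x) (ha : a ∈ P) (ht : t ∈ P) (hnadj : ¬G.Adj a t)
    (htri : InOpenTri a x r t ∨ t = r) (hpq : G.Adj p q) (hzat : z ∈ openSegment ℝ a t)
    (hzpq : z ∈ openSegment ℝ p q) : InOpenTri a x r p ∨ InOpenTri a x r q := by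
  have hK := hS.orient_ne_zero
  have hK₃ : orient r a x ≠ 0 := by rwa [orient_rotate, orient_rotate]
  obtain ⟨hz₁, hz₂, hz₃, hz₃_eq⟩ := sameSide_of_mem_openSegment hK htri hzat
  -- Otherwise `p` and `q` both lie on the line `r a`; then so does `z`, which forces `t = r`,
  -- and `r`, `a`, `p` would be collinear.
  have hpq_side : SameSide r a p x ∨ SameSide r a q x := by
    by_contra! hle
    obtain ⟨hp, hq⟩ := hle
    rw [SameSide, not_lt] at hp hq
    obtain ⟨μ, hμ0, hμ1, rfl⟩ := mem_openSegment_iff_exists_add_smul.mp hzpq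
    rw [orient_add_smul_sub] at hz₃ hz₃_eq
    have hP : orient r a p * orient r a x = 0 := by nlinarith
    have hQ : orient r a q * orient r a x = 0 := by nlinarith
    have hp0 := (mul_eq_zero.mp hP).resolve_right hK₃
    obtain rfl := hz₃_eq (by rw [hp0, (mul_eq_zero.mp hQ).resolve_right hK₃]; ring)
    have hpa := ne_of_crossing hgp ha ht hnadj hpq hzat hzpq
    have hpt := ne_of_crossing hgp ht ha (fun h => hnadj (G.symm h)) hpq
      (openSegment_symm ℝ a t ▸ hzat) hzpq
    exact hgp.orient_ne_zero ht ha (G.mem_left hpq) (ne_of_orient_ne_zero hK₃).1 hpt.symm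
      hpa.symm hp0
  rcases hpq_side with hp | hq
  · exact .inl (hS.inOpenTri_of_sameSide hgp (G.symm hpq) (openSegment_symm ℝ p q ▸ hzpq)
      hz₁ hz₂ hz₃ hp)
  · exact .inr (hS.inOpenTri_of_sameSide hgp hpq hzpq hz₁ hz₂ hz₃ hq)

theorem finite_crossings (hgp : GenPos P) {a b : Pt} (ha : a ∈ P) (hb : b ∈ P) (hab : a ≠ b)
    (hnadj : ¬G.Adj a b) :
    {t : ℝ | t ∈ Set.Ioo 0 1 ∧ ∃ r s, G.Adj r s ∧ a + t • (b - a) ∈ openSegment ℝ r s}.Finite := by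
  have hE : {e : Pt × Pt | G.Adj e.1 e.2}.Finite :=
    (P ×ˢ P).finite_toSet.subset fun e he =>
      Finset.mem_coe.mpr (Finset.mem_product.mpr ⟨G.mem_left he, G.mem_left (G.symm he)⟩)
  refine (hE.biUnion fun e hadj => Set.Subsingleton.finite (s := {t : ℝ | t ∈ Set.Ioo 0 1 ∧
      a + t • (b - a) ∈ openSegment ℝ e.1 e.2}) ?_).subset ?_
  · rintro t₁ ⟨ht₁, h₁⟩ t₂ ⟨ht₂, h₂⟩
    have hz₁ : a + t₁ • (b - a) ∈ openSegment ℝ a b :=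
      mem_openSegment_iff_exists_add_smul.mpr ⟨t₁, ht₁.1, ht₁.2, rfl⟩
    have hz₂ : a + t₂ • (b - a) ∈ openSegment ℝ a b :=
      mem_openSegment_iff_exists_add_smul.mpr ⟨t₂, ht₂.1, ht₂.2, rfl⟩
    have hr : orient a b e.1 ≠ 0 :=
      hgp.orient_ne_zero ha hb (G.mem_left hadj) hab
        (ne_of_crossing hgp ha hb hnadj hadj hz₁ h₁).symm
        (ne_of_crossing hgp hb ha (fun h => hnadj (G.symm h)) hadj
          (openSegment_symm ℝ a b ▸ hz₁) h₁).symm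
    have := eq_of_mem_openSegment_of_orient_eq_zero hr h₁ h₂
      (orient_eq_zero_of_mem_openSegment hz₁) (orient_eq_zero_of_mem_openSegment hz₂)
    exact smul_left_injective ℝ (sub_ne_zero.mpr hab.symm) (add_left_cancel this)
  · rintro t ⟨ht, r, s, hrs, hmem⟩
    exact Set.mem_biUnion (x := (r, s)) hrs ⟨ht, hmem⟩

end PlaneGraph

namespace Triangulation

variable {P : Finset Pt} (T : Triangulation P)

theorem exists_first_crossing (hgp : GenPos P) {a b : Pt} (ha : a ∈ P) (hb : b ∈ P)
    (hab : a ≠ b) (hnadj : ¬T.Adj a b) :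
    ∃ x r s, T.Adj r s ∧ x ∈ openSegment ℝ r s ∧ x ∈ openSegment ℝ a b ∧
      ∀ p q, T.Adj p q → Disjoint (openSegment ℝ a x) (openSegment ℝ p q) := by
  set crossing : Set ℝ :=
    {t | t ∈ Set.Ioo 0 1 ∧ ∃ r s, T.Adj r s ∧ a + t • (b - a) ∈ openSegment ℝ r s}
  have hfin : crossing.Finite := T.finite_crossings hgp ha hb hab hnadj
  have hne : crossing.Nonempty := by
    obtain ⟨r, s, hrs, -, z, hzab, hzrs⟩ := T.maximal a ha b hb hab hnadj
    obtain ⟨t, ht0, ht1, rfl⟩ := mem_openSegment_iff_exists_add_smul.mp hzab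
    exact ⟨t, ⟨ht0, ht1⟩, r, s, hrs, hzrs⟩
  obtain ⟨t₀, ⟨⟨ht₀0, ht₀1⟩, r, s, hrs, hx⟩, hmin⟩ := Set.exists_min_image crossing id hfin hne
  refine ⟨a + t₀ • (b - a), r, s, hrs, hx,
    mem_openSegment_iff_exists_add_smul.mpr ⟨t₀, ht₀0, ht₀1, rfl⟩, fun p q hpq => ?_⟩
  refine Set.disjoint_left.mpr fun z hz hzpq => ?_
  obtain ⟨c, hc0, hc1, rfl⟩ := mem_openSegment_iff_exists_add_smul.mp hz
  have hct : c * t₀ ∈ crossing :=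
    ⟨⟨by positivity, by nlinarith⟩, p, q, hpq, by convert hzpq using 1; module⟩
  have := hmin _ hct
  rw [id, id] at this
  nlinarith

theorem exists_sees (hgp : GenPos P) {a c : Pt} (ha : a ∈ P) (hc : c ∈ P) (hac : a ≠ c)
    (hnadj : ¬T.Adj a c) :
    ∃ x r s, T.Sees a r s x ∧ T.Sees a s r x ∧ x ∈ openSegment ℝ a c := by
  obtain ⟨x, r, s, hrs, hx_rs, hx_ac, hfree⟩ := T.exists_first_crossing hgp ha hc hac hnadj
  have hr := T.mem_left hrs
  have hs := T.mem_left (T.symm hrs)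
  have hx_sr : x ∈ openSegment ℝ s r := openSegment_symm ℝ r s ▸ hx_rs
  have hra := T.ne_of_crossing hgp ha hc hnadj hrs hx_ac hx_rs
  have hsa := T.ne_of_crossing hgp ha hc hnadj (T.symm hrs) hx_ac hx_sr
  have hnotMem : ∀ w ∈ P, w ∉ openSegment ℝ a x := fun w hw hmem =>
    hgp.notMem_openSegment ha hc hw hac (openSegment_subset_openSegment_of_mem_left hx_ac hmem)
  refine ⟨x, r, s, ⟨hrs, hx_rs, ?_, hfree, hnotMem⟩, ⟨T.symm hrs, hx_sr, ?_, hfree, hnotMem⟩,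
    hx_ac⟩
  · exact orient_ne_zero_of_mem_openSegment
      (hgp.orient_ne_zero hr hs ha (T.ne hrs) hra hsa) hx_rs
  · exact orient_ne_zero_of_mem_openSegment
      (hgp.orient_ne_zero hs hr ha (T.ne hrs).symm hsa hra) hx_sr

theorem exists_inOpenTri_of_sees (hgp : GenPos P) {a r s x : Pt} (hS : T.Sees a r s x)
    (ha : a ∈ P) (har : ¬T.Adj a r) : ∃ w ∈ P, InOpenTri a x r w := by
  have hrP := T.mem_left hS.adj
  obtain ⟨p, q, hpq, -, z, hzar, hzpq⟩ :=
    T.maximal a ha r hrP (ne_of_orient_ne_zero hS.orient_ne_zero).2.2.symm har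
  rcases hS.inOpenTri_of_crossing hgp ha hrP har (.inr rfl) hpq hzar hzpq with h | h
  · exact ⟨p, T.mem_left hpq, h⟩
  · exact ⟨q, T.mem_left (T.symm hpq), h⟩

theorem exists_adj_lt_of_sees (hgp : GenPos P) {a : Pt} (ha : a ∈ P) (φ : Pt →ₗ[ℝ] ℝ)
    {r s x : Pt} (hS : T.Sees a r s x) (hx : φ a < φ x) (hr : φ a < φ r) :
    ∃ b, T.Adj a b ∧ φ a < φ b := by
  induction hn : (P.filter (InOpenTri a x r)).card using Nat.strong_induction_on
    generalizing r s x with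
  | _ n ih =>
  by_cases har : T.Adj a r
  · exact ⟨r, har, hr⟩
  obtain ⟨w, hwP, hw⟩ := T.exists_inOpenTri_of_sees hgp hS ha har
  have hw_lt : φ a < φ w := hw.lt_apply φ hx hr
  by_cases haw : T.Adj a w
  · exact ⟨w, haw, hw_lt⟩
  obtain ⟨x₁, r₁, s₁, hS₁, hS₁', hx₁⟩ := T.exists_sees hgp ha hwP (ne_of_apply_ne φ hw_lt.ne) haw
  have hx₁_tri : InOpenTri a x r x₁ := hw.of_mem_openSegment hx₁
  have descend : ∀ {r' s'}, T.Sees a r' s' x₁ → InOpenTri a x r r' →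
      ∃ b, T.Adj a b ∧ φ a < φ b := by
    intro r' s' hS' hr'
    have hsub : P.filter (InOpenTri a x₁ r') ⊂ P.filter (InOpenTri a x r) := by
      refine ⟨fun y hy => ?_, fun hsup => ?_⟩
      · rw [Finset.mem_filter] at hy ⊢
        exact ⟨hy.1, hx₁_tri.of_inOpenTri hr' hy.2⟩
      · have hw' := (Finset.mem_filter.mp (hsup (Finset.mem_filter.mpr ⟨hwP, hw⟩))).2
        exact hw'.orient_ne_zero hS'.orient_ne_zero
          (by rw [orient_swap, orient_eq_zero_of_mem_openSegment hx₁, neg_zero])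
    exact ih _ (hn ▸ Finset.card_lt_card hsub) hS' (φ.lt_apply_of_mem_openSegment hx₁ hw_lt)
      (hr'.lt_apply φ hx hr) rfl
  rcases hS.inOpenTri_of_crossing hgp ha hwP haw (.inl hw) hS₁.adj hx₁ hS₁.mem_openSegment
    with h | h
  · exact descend hS₁ h
  · exact descend hS₁' h

theorem exists_adj_lt (hgp : GenPos P) {a c : Pt} (ha : a ∈ P) (hc : c ∈ P)
    (φ : Pt →ₗ[ℝ] ℝ) (hac : φ a < φ c) : ∃ b, T.Adj a b ∧ φ a < φ b := by
  by_cases hadj : T.Adj a c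
  · exact ⟨c, hadj, hac⟩
  obtain ⟨x, r, s, hS, hS', hx⟩ := T.exists_sees hgp ha hc (ne_of_apply_ne φ hac.ne) hadj
  have hx_lt := φ.lt_apply_of_mem_openSegment hx hac
  rcases φ.lt_apply_left_or_right hS.mem_openSegment hx_lt with hr | hs
  · exact T.exists_adj_lt_of_sees hgp ha φ hS hx_lt hr
  · exact T.exists_adj_lt_of_sees hgp ha φ hS' hx_lt hs

end Triangulation

theorem exists_linearMap_pos_injOn (Q : Finset Pt) {d₁ d₂ : Pt} (hD : det2 d₁ d₂ ≠ 0) :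
    ∃ φ : Pt →ₗ[ℝ] ℝ, 0 < φ d₁ ∧ 0 < φ d₂ ∧ Set.InjOn φ Q := by
  -- `φ t` takes the values `D²` and `t D²` on `d₁` and `d₂`, where `D = det2 d₁ d₂`, and for
  -- each pair `p ≠ q` at most one value of `t` makes `φ t p = φ t q`.
  let φ (t : ℝ) : Pt →ₗ[ℝ] ℝ :=
    { toFun := fun v => det2 d₁ d₂ * (det2 v d₂ + t * det2 d₁ v)
      map_add' := fun v w => by simp only [det2, Prod.fst_add, Prod.snd_add]; ring
      map_smul' := fun c v => by
        simp only [det2, Prod.smul_fst, Prod.smul_snd, smul_eq_mul, RingHom.id_apply]; ring }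
  set bad : Finset ℝ := (Q ×ˢ Q).image fun e => -det2 (e.1 - e.2) d₂ / det2 d₁ (e.1 - e.2)
  obtain ⟨t, ht, htbad⟩ := (Set.Ioi_infinite 0).exists_notMem_finset bad
  have hD2 := mul_self_pos.mpr hD
  have hd₁ : det2 d₁ d₁ = 0 := by simp only [det2]; ring
  have hd₂ : det2 d₂ d₂ = 0 := by simp only [det2]; ring
  refine ⟨φ t, ?_, ?_, fun p hp q hq hpq => ?_⟩
  · change 0 < det2 d₁ d₂ * (det2 d₁ d₂ + t * det2 d₁ d₁)
    rw [hd₁]; simpa using hD2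
  · change 0 < det2 d₁ d₂ * (det2 d₂ d₂ + t * det2 d₁ d₂)
    rw [hd₂]; nlinarith [ht.out]
  · have h : det2 (p - q) d₂ + t * det2 d₁ (p - q) = 0 := by
      have := sub_eq_zero.mpr hpq
      rw [← map_sub] at this
      exact (mul_eq_zero.mp this).resolve_left hD
    by_cases h₂ : det2 d₁ (p - q) = 0
    · rw [h₂, mul_zero, add_zero] at h
      have := det2_smul_eq d₁ d₂ (p - q)
      rw [h, h₂, zero_smul, zero_smul, add_zero, smul_eq_zero] at this
      exact sub_eq_zero.mp (this.resolve_left hD)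
    · refine absurd (Finset.mem_image.mpr ⟨(p, q), Finset.mem_product.mpr ⟨hp, hq⟩, ?_⟩) htbad
      field_simp
      linarith

theorem GenPos.exists_linearMap_injOn_lt {P : Finset Pt} (hgp : GenPos P) {W : Set Pt}
    (hW : W.Subsingleton) (hWP : W ⊆ P) {u v : Pt} (hu : u ∈ P) (hv : v ∈ P) (huv : u ≠ v)
    (huW : u ∉ W) (hvW : v ∉ W) :
    ∃ φ : Pt →ₗ[ℝ] ℝ, Set.InjOn φ P ∧ ∀ w ∈ W, φ w < φ u ∧ φ w < φ v := by
  rcases hW.eq_empty_or_singleton with rfl | ⟨w, rfl⟩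
  · obtain ⟨φ, -, -, hinj⟩ := exists_linearMap_pos_injOn P (d₁ := (1, 0)) (d₂ := (0, 1))
      (by norm_num [det2])
    exact ⟨φ, hinj, by simp⟩
  · have hw : w ∈ P := hWP rfl
    have hwu : w ≠ u := fun h => huW (h ▸ rfl)
    have hwv : w ≠ v := fun h => hvW (h ▸ rfl)
    obtain ⟨φ, hu', hv', hinj⟩ :=
      exists_linearMap_pos_injOn P (hgp.orient_ne_zero hw hu hv hwu hwv huv)
    rw [map_sub, sub_pos] at hu' hv'
    exact ⟨φ, hinj, fun _ hw' => hw' ▸ ⟨hu', hv'⟩⟩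

theorem SimpleGraph.reachable_induce_compl_of_exists_adj_lt {V : Type*} [Finite V]
    (G : SimpleGraph V) (f : V → ℝ) {m : V} (hup : ∀ v ≠ m, ∃ w, G.Adj v w ∧ f v < f w)
    (s : Set V) (hm : m ∉ s) (a : V) (ha : a ∉ s) (hs : ∀ w ∈ s, f w < f a) :
    (G.induce sᶜ).Reachable ⟨a, ha⟩ ⟨m, hm⟩ := by
  induction hn : {v | f a < f v}.ncard using Nat.strong_induction_on generalizing a with
  | _ n ih =>
  by_cases ham : a = m
  · subst ham; rfl
  obtain ⟨w, hadj, hlt⟩ := hup a ham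
  have hw : w ∉ s := fun hw => (hs w hw).not_gt hlt
  have hsub : {v | f w < f v} ⊂ {v | f a < f v} :=
    ⟨fun v hv => hlt.trans hv, fun h => lt_irrefl (f w) (h hlt)⟩
  have hstep : (G.induce sᶜ).Adj ⟨a, ha⟩ ⟨w, hw⟩ := hadj
  exact hstep.reachable.trans (ih _ (hn ▸ Set.ncard_lt_ncard hsub) w hw
    (fun v hv => (hs v hv).trans hlt) rfl)

theorem Triangulation.preconnected_induce_compl {P : Finset Pt} (T : Triangulation P)
    (hgp : GenPos P) (S : Finset {x // x ∈ P}) (hS : S.card ≤ 1) :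
    (T.toPlaneGraph.graph.induce (S : Set {x // x ∈ P})ᶜ).Preconnected := by
  rintro ⟨u, hu⟩ ⟨v, hv⟩
  by_cases huv : u = v
  · subst huv; rfl
  obtain ⟨φ, hinj, hlt⟩ := hgp.exists_linearMap_injOn_lt
    (Set.Subsingleton.image (fun a ha b hb => Finset.card_le_one.mp hS a ha b hb) _)
    (by rintro _ ⟨w, -, rfl⟩; exact w.2) u.2 v.2 (Subtype.val_injective.ne huv)
    (by rintro ⟨w, hw, hwu⟩; exact hu (Subtype.val_injective hwu ▸ hw))
    (by rintro ⟨w, hw, hwv⟩; exact hv (Subtype.val_injective hwv ▸ hw))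
  obtain ⟨m, hmP, hmax⟩ := P.exists_max_image φ ⟨u, u.2⟩
  have hup : ∀ y ≠ (⟨m, hmP⟩ : {x // x ∈ P}), ∃ z, T.toPlaneGraph.graph.Adj y z ∧ φ y < φ z := by
    intro y hy
    have hlt : φ y < φ m := (hmax y y.2).lt_of_ne fun h => hy (Subtype.ext (hinj y.2 hmP h))
    obtain ⟨b, hadj, hb⟩ := T.exists_adj_lt hgp y.2 hmP φ hlt
    exact ⟨⟨b, T.mem_left (T.symm hadj)⟩, hadj, hb⟩
  have hmS : (⟨m, hmP⟩ : {x // x ∈ P}) ∉ (S : Set {x // x ∈ P}) := fun h =>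
    (hlt _ ⟨_, h, rfl⟩).1.not_ge (hmax u u.2)
  have reach := T.toPlaneGraph.graph.reachable_induce_compl_of_exists_adj_lt (φ ·) hup _ hmS
  exact (reach u hu fun w hw => (hlt _ ⟨w, hw, rfl⟩).1).trans
    (reach v hv fun w hw => (hlt _ ⟨w, hw, rfl⟩).2).symm

/-- every triangulation of a set of at least 3 points in general
position is 2-connected as an abstract graph. -/
theorem triangulation_two_connected (P : Finset Pt) (hgp : GenPos P)
    (hcard : 3 ≤ P.card) (T : Triangulation P) :
    KConnected T.toPlaneGraph.graph 2 := by
  refine ⟨by rwa [Fintype.card_coe], fun S hS => ?_⟩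
  rw [SimpleGraph.connected_iff]
  refine ⟨T.preconnected_induce_compl hgp S (by omega), ?_⟩
  obtain ⟨y, -, hy⟩ := Finset.exists_mem_notMem_of_card_lt_card
    (s := S) (t := Finset.univ) (by rw [Finset.card_univ, Fintype.card_coe]; omega)
  exact ⟨⟨y, hy⟩⟩
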